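/- For all integers n ≥ 2 and k ≥ 1, the total variation distance between the k-riffle shuffle measure and the cut-then-k-riffle-shuffle measure satisfies ||R_{k,n} − C_{k,n}|| = (1/(k^n·n)) · Σ_{j=1}^{n−1} j·(n−j)·A_{n−1,j}·binom(n+k−j−1, n−1). -/

import Mathlib

/-- Number of descents of a permutation of `{1,...,n}` (here `Fin n`, 0-indexed):
the number of positions `i` with `1 ≤ i ≤ n-1` and `π(i) > π(i+1)`. -/
def numDescents (n : ℕ) (π : Equiv.Perm (Fin n)) : ℕ :=
  ((Finset.range (n - 1)).filter (fun i =>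
    ∃ h : i + 1 < n, π ⟨i + 1, h⟩ < π ⟨i, Nat.lt_of_succ_lt h⟩)).card

/-- `π` has a cyclic descent at `n` if `π(n) > π(1)`. -/
def hasCyclicDescentAtLast (n : ℕ) (π : Equiv.Perm (Fin n)) : Prop :=
  ∃ h : 0 < n, π ⟨0, h⟩ < π ⟨n - 1, Nat.sub_lt h Nat.one_pos⟩

instance (n : ℕ) (π : Equiv.Perm (Fin n)) : Decidable (hasCyclicDescentAtLast n π) :=
  exists_prop_decidable _

/-- Number of cyclic descents: `d(π)+1` if `π` has a cyclic descent at `n`, else `d(π)`. -/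
def numCyclicDescents (n : ℕ) (π : Equiv.Perm (Fin n)) : ℕ :=
  numDescents n π + if hasCyclicDescentAtLast n π then 1 else 0

/-- The k-riffle shuffle measure `R_{k,n}(π) = binom(n+k-d(π)-1, n) / k^n`. -/
noncomputable def riffle (k n : ℕ) (π : Equiv.Perm (Fin n)) : ℝ :=
  (Nat.choose (n + k - numDescents n π - 1) n : ℝ) / (k : ℝ) ^ n

/-- The cut-then-k-riffle-shuffle measure
`C_{k,n}(π) = binom(n+k-cd(π)-1, n-1) / (n·k^(n-1))`. -/
noncomputable def cutRiffle (k n : ℕ) (π : Equiv.Perm (Fin n)) : ℝ :=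
  (Nat.choose (n + k - numCyclicDescents n π - 1) (n - 1) : ℝ) / ((n : ℝ) * (k : ℝ) ^ (n - 1))

/-- Eulerian number `A_{m,j}`: the number of permutations of `m` symbols with `j-1` descents. -/
def eulerianA (m j : ℕ) : ℕ :=
  (Finset.univ.filter (fun π : Equiv.Perm (Fin m) => numDescents m π = j - 1)).card

/-!
With `c = cd π`, the difference `R - C` depends only on `c` and on whether `π` has a cyclic
descent at `n`: `|R - C|` is `(n - c) B c` or `c B c` respectively, where
`B c = binom(n+k-c-1, n-1) / (n k^n)`.
Every permutation of `n` letters is uniquely `σ̂ ∘ ρ`, where `σ̂` extends a permutation `σ` of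
`n - 1` letters by fixing the last one and `ρ` is a rotation. Rotating only shifts the set of
cyclic descents, so `cd (σ̂ ∘ ρ) = d σ + 1 =: j`, and exactly `j` of the `n` rotations produce a
cyclic descent at `n`. A rotation class therefore contributes `2 j (n - j) B j`, and grouping the
`σ` by their number of descents brings in the Eulerian numbers.
-/

open Finset Equiv

theorem numDescents_le (n : ℕ) (π : Perm (Fin n)) : numDescents n π ≤ n - 1 :=
  (card_filter_le _ _).trans (card_range _).le

theorem numCyclicDescents_le (n : ℕ) (π : Perm (Fin n)) : numCyclicDescents n π ≤ n := by
  have := numDescents_le n π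
  by_cases h : hasCyclicDescentAtLast n π
  · have := h.1
    simp only [numCyclicDescents, h, if_true]
    omega
  · simp only [numCyclicDescents, h, if_false]
    omega

theorem numDescents_succ_eq_card (m : ℕ) (π : Perm (Fin (m + 1))) :
    numDescents (m + 1) π = #{i : Fin m | π i.succ < π i.castSucc} := by
  rw [numDescents, Nat.add_sub_cancel, ← card_map Fin.valEmbedding]
  congr 1
  ext i
  simp only [mem_filter, mem_range, mem_map, mem_univ, true_and, Fin.valEmbedding_apply]
  constructor
  · rintro ⟨hi, _, h⟩
    exact ⟨⟨i, hi⟩, h, rfl⟩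
  · rintro ⟨i, h, rfl⟩
    exact ⟨i.isLt, by omega, h⟩

theorem hasCyclicDescentAtLast_succ_iff (m : ℕ) (π : Perm (Fin (m + 1))) :
    hasCyclicDescentAtLast (m + 1) π ↔ π 0 < π (Fin.last m) :=
  ⟨fun ⟨_, h⟩ => h, fun h => ⟨m.succ_pos, h⟩⟩

section CyclicDescents

variable {m : ℕ}

def cyclicDescents (π : Perm (Fin (m + 1))) : Finset (Fin (m + 1)) :=
  {i | π (i + 1) < π i}

@[simp]
theorem mem_cyclicDescents {π : Perm (Fin (m + 1))} {i : Fin (m + 1)} :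
    i ∈ cyclicDescents π ↔ π (i + 1) < π i := by
  simp [cyclicDescents]

theorem card_cyclicDescents (π : Perm (Fin (m + 1))) :
    #(cyclicDescents π) = numCyclicDescents (m + 1) π := by
  rw [cyclicDescents, card_filter, Fin.sum_univ_castSucc, numCyclicDescents,
    numDescents_succ_eq_card, card_filter]
  simp [Fin.coeSucc_eq_succ, hasCyclicDescentAtLast_succ_iff]

theorem numCyclicDescents_mul_addRight (π : Perm (Fin (m + 1))) (t : Fin (m + 1)) :
    numCyclicDescents (m + 1) (π * Equiv.addRight t) = numCyclicDescents (m + 1) π := by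
  rw [← card_cyclicDescents, ← card_cyclicDescents]
  refine card_equiv (Equiv.addRight t) fun i => ?_
  simp [add_right_comm]

theorem hasCyclicDescentAtLast_mul_addRight_iff (π : Perm (Fin (m + 1))) (t : Fin (m + 1)) :
    hasCyclicDescentAtLast (m + 1) (π * Equiv.addRight t) ↔ t - 1 ∈ cyclicDescents π := by
  have : Fin.last m = -1 := eq_neg_of_add_eq_zero_left (Fin.last_add_one m)
  simp [hasCyclicDescentAtLast_succ_iff, this, ← sub_eq_neg_add]

theorem sum_ite_hasCyclicDescentAtLast_mul_addRight {M : Type*} [AddCommMonoid M]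
    (π : Perm (Fin (m + 1))) (x y : M) :
    ∑ t : Fin (m + 1), (if hasCyclicDescentAtLast (m + 1) (π * Equiv.addRight t) then x else y)
      = numCyclicDescents (m + 1) π • x + (m + 1 - numCyclicDescents (m + 1) π) • y := by
  simp_rw [hasCyclicDescentAtLast_mul_addRight_iff]
  rw [Fintype.sum_equiv (Equiv.subRight 1) (fun t => if t - 1 ∈ cyclicDescents π then x else y)
    (fun t => if t ∈ cyclicDescents π then x else y) (fun _ => rfl), Finset.sum_ite, sum_const,
    sum_const, filter_mem_eq_inter, univ_inter, filter_not, filter_mem_eq_inter, univ_inter,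
    ← compl_eq_univ_sdiff, card_compl, Fintype.card_fin, card_cyclicDescents]

end CyclicDescents

section ExtendLast

variable {m : ℕ}

def extendLast (σ : Perm (Fin m)) : Perm (Fin (m + 1)) :=
  finSuccEquivLast.symm.permCongr σ.optionCongr

@[simp]
theorem extendLast_castSucc (σ : Perm (Fin m)) (i : Fin m) :
    extendLast σ i.castSucc = (σ i).castSucc := by
  simp [extendLast, finSuccEquivLast_castSucc, finSuccEquivLast_symm_some]

@[simp]
theorem extendLast_last (σ : Perm (Fin m)) : extendLast σ (Fin.last m) = Fin.last m := by
  simp [extendLast, finSuccEquivLast_last]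

theorem numDescents_extendLast (σ : Perm (Fin (m + 1))) :
    numDescents (m + 2) (extendLast σ) = numDescents (m + 1) σ := by
  rw [numDescents_succ_eq_card, numDescents_succ_eq_card, card_filter, card_filter,
    Fin.sum_univ_castSucc]
  simp [Fin.succ_castSucc, -Fin.castSucc_succ, (Fin.castSucc_lt_last _).not_gt]

theorem numCyclicDescents_extendLast (σ : Perm (Fin (m + 1))) :
    numCyclicDescents (m + 2) (extendLast σ) = numDescents (m + 1) σ + 1 := by
  have hcyc : hasCyclicDescentAtLast (m + 2) (extendLast σ) := by
    rw [hasCyclicDescentAtLast_succ_iff, ← Fin.castSucc_zero, extendLast_castSucc,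
      extendLast_last]
    exact Fin.castSucc_lt_last _
  rw [numCyclicDescents, if_pos hcyc, numDescents_extendLast]

theorem bijective_extendLast_mul_addRight :
    Function.Bijective fun p : Perm (Fin m) × Fin (m + 1) =>
      extendLast p.1 * Equiv.addRight p.2 := by
  refine (Fintype.bijective_iff_injective_and_card _).2 ⟨?_, ?_⟩
  · rintro ⟨σ, s⟩ ⟨τ, t⟩ h
    -- the rotation is recovered as the position of the fixed point `Fin.last m`
    have hst : s = t := by
      have := congrArg (fun π : Perm (Fin (m + 1)) => π (Fin.last m - s)) h
      simp only [Perm.mul_apply, Equiv.coe_addRight, sub_add_cancel, extendLast_last] at this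
      have := (extendLast τ).injective (this.symm.trans (extendLast_last τ).symm)
      rwa [sub_add_eq_add_sub, sub_eq_iff_eq_add, add_left_cancel_iff, eq_comm] at this
    subst hst
    have hστ : extendLast σ = extendLast τ := mul_right_cancel h
    refine Prod.ext (Equiv.ext fun i => Fin.castSucc_injective m ?_) rfl
    simpa using congrArg (fun π : Perm (Fin (m + 1)) => π i.castSucc) hστ
  · simp [Fintype.card_perm, Nat.factorial_succ, mul_comm]

end ExtendLast

theorem sum_ite_hasCyclicDescentAtLast {M : Type*} [AddCommMonoid M] (m : ℕ) (a b : ℕ → M) :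
    ∑ π : Perm (Fin (m + 2)), (if hasCyclicDescentAtLast (m + 2) π
        then a (numCyclicDescents (m + 2) π) else b (numCyclicDescents (m + 2) π))
      = ∑ σ : Perm (Fin (m + 1)), ((numDescents (m + 1) σ + 1) • a (numDescents (m + 1) σ + 1)
          + (m + 1 - numDescents (m + 1) σ) • b (numDescents (m + 1) σ + 1)) := by
  rw [← bijective_extendLast_mul_addRight.sum_comp, Fintype.sum_prod_type]
  refine sum_congr rfl fun σ _ => ?_
  simp only [numCyclicDescents_mul_addRight, numCyclicDescents_extendLast]
  rw [sum_ite_hasCyclicDescentAtLast_mul_addRight, numCyclicDescents_extendLast]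
  congr 2
  omega

theorem sum_numDescents_succ_eq_sum_eulerianA {M : Type*} [AddCommMonoid M] (m : ℕ)
    (f : ℕ → M) :
    ∑ σ : Perm (Fin (m + 1)), f (numDescents (m + 1) σ + 1)
      = ∑ j ∈ Icc 1 (m + 1), eulerianA (m + 1) j • f j := by
  have hmaps : ∀ σ ∈ (univ : Finset (Perm (Fin (m + 1)))),
      numDescents (m + 1) σ + 1 ∈ Icc 1 (m + 1) := fun σ _ => by
    have := numDescents_le (m + 1) σ
    simp only [mem_Icc]
    omega
  rw [← sum_fiberwise_of_maps_to hmaps]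
  refine sum_congr rfl fun j hj => ?_
  rw [mem_Icc] at hj
  rw [sum_congr rfl fun σ hσ => congrArg f (mem_filter.1 hσ).2, sum_const, eulerianA]
  congr 2
  ext σ
  simp only [mem_filter, mem_univ, true_and]
  omega

theorem Nat.cast_choose_succ_right_eq {R : Type*} [Ring R] (N r : ℕ) :
    (N.choose (r + 1) : R) * (r + 1) = N.choose r * (N - r) := by
  rcases le_or_gt r N with hrN | hNr
  · have h := congrArg (Nat.cast : ℕ → R) (N.choose_succ_right_eq r)
    push_cast [Nat.cast_sub hrN] at h
    exact h
  · simp [Nat.choose_eq_zero_of_lt hNr, Nat.choose_eq_zero_of_lt (hNr.trans r.lt_succ_self)]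

theorem riffle_sub_cutRiffle (n k : ℕ) (hn : n ≠ 0) (hk : k ≠ 0) (π : Perm (Fin n)) :
    riffle k n π - cutRiffle k n π
      = (if hasCyclicDescentAtLast n π then (n : ℝ) - numCyclicDescents n π
          else -(numCyclicDescents n π : ℝ))
        * (n + k - numCyclicDescents n π - 1).choose (n - 1) / (n * (k : ℝ) ^ n) := by
  obtain ⟨r, rfl⟩ : ∃ r, n = r + 1 := Nat.exists_eq_succ_of_ne_zero hn
  have hc := numCyclicDescents_le (r + 1) π
  unfold riffle cutRiffle
  set N := r + 1 + k - numCyclicDescents (r + 1) π - 1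
  have hN : (N : ℝ) = r + k - numCyclicDescents (r + 1) π := by
    rw [Nat.cast_sub (by omega), Nat.cast_sub (by omega)]; push_cast; ring
  have hk' : (k : ℝ) ≠ 0 := by exact_mod_cast hk
  by_cases hcyc : hasCyclicDescentAtLast (r + 1) π
  · have hcd : numCyclicDescents (r + 1) π = numDescents (r + 1) π + 1 := by
      simp [numCyclicDescents, hcyc]
    have hN1 : r + 1 + k - numDescents (r + 1) π - 1 = N + 1 := by omega
    have key : ((N + 1).choose (r + 1) : ℝ) * (r + 1) = (N + 1) * N.choose r := by
      exact_mod_cast (N.add_one_mul_choose_eq r).symm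
    rw [if_pos hcyc, hN1, Nat.add_sub_cancel]
    field_simp
    push_cast at key ⊢
    linear_combination (k : ℝ) ^ r * key + (k : ℝ) ^ r * (N.choose r : ℝ) * hN
  · have hcd : numCyclicDescents (r + 1) π = numDescents (r + 1) π := by
      simp [numCyclicDescents, hcyc]
    have key := Nat.cast_choose_succ_right_eq (R := ℝ) N r
    rw [if_neg hcyc, ← hcd, Nat.add_sub_cancel]
    field_simp
    push_cast at key ⊢
    linear_combination (k : ℝ) ^ r * key + (k : ℝ) ^ r * (N.choose r : ℝ) * hN

theorem abs_riffle_sub_cutRiffle (n k : ℕ) (hn : n ≠ 0) (hk : k ≠ 0) (π : Perm (Fin n)) :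
    |riffle k n π - cutRiffle k n π|
      = if hasCyclicDescentAtLast n π
        then ((n : ℝ) - numCyclicDescents n π)
          * ((n + k - numCyclicDescents n π - 1).choose (n - 1) / (n * (k : ℝ) ^ n))
        else (numCyclicDescents n π : ℝ)
          * ((n + k - numCyclicDescents n π - 1).choose (n - 1) / (n * (k : ℝ) ^ n)) := by
  have hc : (numCyclicDescents n π : ℝ) ≤ n := by exact_mod_cast numCyclicDescents_le n π
  rw [riffle_sub_cutRiffle n k hn hk, mul_div_assoc]
  split_ifs
  · exact abs_of_nonneg (mul_nonneg (by linarith) (by positivity))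
  · rw [neg_mul, abs_neg, abs_of_nonneg (by positivity)]

/-- total variation distance between `R_{k,n}` and `C_{k,n}`, first form. -/
theorem totalVariation_riffle_cutRiffle_eq_sum (n k : ℕ) (hn : 2 ≤ n) (hk : 1 ≤ k) :
    (1 / 2) * ∑ π : Equiv.Perm (Fin n), |riffle k n π - cutRiffle k n π|
      = (1 / ((k : ℝ) ^ n * (n : ℝ))) * ∑ j ∈ Finset.Icc 1 (n - 1),
          (j : ℝ) * ((n : ℝ) - (j : ℝ)) * (eulerianA (n - 1) j : ℝ)
            * (Nat.choose (n + k - j - 1) (n - 1) : ℝ) := by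
  obtain ⟨m, rfl⟩ : ∃ m, n = m + 2 := ⟨n - 2, by omega⟩
  set B : ℕ → ℝ := fun j =>
    (m + 2 + k - j - 1).choose (m + 2 - 1) / ((m + 2 : ℕ) * (k : ℝ) ^ (m + 2))
  set g : ℕ → ℝ := fun j => 2 * (j * ((m + 2 : ℕ) - j) * B j)
  have hsum : ∑ π : Perm (Fin (m + 2)), |riffle k (m + 2) π - cutRiffle k (m + 2) π|
      = ∑ σ : Perm (Fin (m + 1)), g (numDescents (m + 1) σ + 1) := by
    simp_rw [abs_riffle_sub_cutRiffle (m + 2) k (by omega) (by omega)]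
    rw [sum_ite_hasCyclicDescentAtLast m (fun j => ((m + 2 : ℕ) - (j : ℝ)) * B j)
      (fun j => (j : ℝ) * B j)]
    refine sum_congr rfl fun σ _ => ?_
    have hd := numDescents_le (m + 1) σ
    simp only [g, nsmul_eq_mul, Nat.cast_sub (show numDescents (m + 1) σ ≤ m + 1 by omega)]
    push_cast
    ring
  rw [hsum, sum_numDescents_succ_eq_sum_eulerianA m g, mul_sum, mul_sum]
  refine sum_congr rfl fun j _ => ?_
  simp only [g, B, nsmul_eq_mul, show m + 2 - 1 = m + 1 from rfl]
  field_simp
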